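/- Stopped performance-difference identity: under the same setup as the performance-difference identity, for every integer m ≥ 1, with σ_m = τ ∧ m, E[ Σ_{k=0}^{σ_m−1} f(x_k, π(x_k)) ] − V*(x) = E[ Σ_{k=0}^{σ_m−1} A*(x_k, π(x_k)) ] − E[ V*(x_{σ_m}) ]. -/

import Mathlib

open MeasureTheory ProbabilityTheory Filter
open scoped ENNReal

open Classical in
/-- Bellman operator of the SSP: `(T V)(x) = inf_{u ∈ U(x)} ( f(x,u) + ∫ V(F(x,u,w)) dμ(w) )`
for nonterminal `x`, and `(T V)(t) = 0`. -/
noncomputable def bellman {X U W : Type*} [MeasurableSpace W] (μ : Measure W)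
    (t : X) (Ua : X → Set U) (f : X → U → ℝ) (F : X → U → W → X)
    (V : X → ℝ) (x : X) : ℝ :=
  if x = t then 0 else ⨅ u : Ua x, (f x (u : U) + ∫ w, V (F x (u : U) w) ∂μ)

/-- Closed-loop trajectory driven by a disturbance sequence `ω : ℕ → W`:
`x₀ = x`, `x_{k+1} = F(x_k, π(x_k), ω_k)`. -/
def traj {X U W : Type*} (F : X → U → W → X) (π : X → U) (x : X) (ω : ℕ → W) : ℕ → X
  | 0 => x
  | k + 1 => F (traj F π x ω k) (π (traj F π x ω k)) (ω k)

/-- The trajectory as a family of random variables on an abstract sample space `Ω`,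
given the disturbance random variables `ξ k : Ω → W`. -/
def trajOn {X U W Ω : Type*} (F : X → U → W → X) (π : X → U) (x : X)
    (ξ : ℕ → Ω → W) (k : ℕ) (ω : Ω) : X :=
  traj F π x (fun i => ξ i ω) k

/-- Hitting time `τ = inf { k ≥ 0 : x_k = t }` of the terminal state (`∞` if never reached),
valued in `ℝ≥0∞`. -/
noncomputable def hitTime {X Ω : Type*} (t : X) (Y : ℕ → Ω → X) (ω : Ω) : ℝ≥0∞ :=
  ⨅ (k : ℕ) (_ : Y k ω = t), (k : ℝ≥0∞)

/-- Total expected cost `J = E[ Σ_{k=0}^{τ-1} f(x_k, π(x_k)) ]` (in `ℝ≥0∞`; the stage cost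
is nonnegative). -/
noncomputable def totalCost {X U Ω : Type*} [MeasurableSpace Ω] (P : Measure Ω)
    (t : X) (f : X → U → ℝ) (π : X → U) (Y : ℕ → Ω → X) : ℝ≥0∞ :=
  ∫⁻ ω, ∑' (k : ℕ), (if (k : ℝ≥0∞) < hitTime t Y ω
    then ENNReal.ofReal (f (Y k ω) (π (Y k ω))) else 0) ∂P

/-- Expected hitting time `E[τ]` (in `ℝ≥0∞`). -/
noncomputable def expHit {X Ω : Type*} [MeasurableSpace Ω] (P : Measure Ω)
    (t : X) (Y : ℕ → Ω → X) : ℝ≥0∞ :=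
  ∫⁻ ω, hitTime t Y ω ∂P

/-- Optimal advantage `A*(x,u) = f(x,u) + ∫ V*(F(x,u,w)) dμ(w) - V*(x)`. -/
noncomputable def advantage {X U W : Type*} [MeasurableSpace W] (μ : Measure W)
    (f : X → U → ℝ) (F : X → U → W → X) (Vstar : X → ℝ) (y : X) (u : U) : ℝ :=
  f y u + ∫ w, Vstar (F y u w) ∂μ - Vstar y

/-- The stopped index `σ_m = τ ∧ m` as a natural number. -/
noncomputable def stopIdx {X Ω : Type*} (t : X) (Y : ℕ → Ω → X) (m : ℕ) (ω : Ω) : ℕ :=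
  sInf {k | k = m ∨ Y k ω = t}

/-!
Since `A*(y, π y) = f(y, π y) + (P_π V*)(y) - V*(y)` with `(P_π V)(y) = ∫ V(F(y, π y, w)) dμ(w)`,
the identity is Dynkin's formula `E[V*(x_σ)] = V*(x) + E[Σ_{k<σ} (P_π V* - V*)(x_k)]` for the
bounded stopping time `σ = τ ∧ m`. Telescoping `V*(x_σ) - V*(x)` along the path reduces it to the
vanishing of `E[1{k < σ} ((P_π V*)(x_k) - V*(x_{k+1}))]`: the event `{k < σ}` and the state `x_k`
are functions of `ξ₀, …, ξ_{k-1}`, hence independent of `ξ_k`, and integrating out `ξ_k` turns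
`V*(x_{k+1})` into `(P_π V*)(x_k)`.
-/

section Trajectory

variable {X U W : Type*} (F : X → U → W → X) (π : X → U) (x : X)

theorem traj_congr {ω ω' : ℕ → W} {k : ℕ} (h : ∀ i < k, ω i = ω' i) :
    traj F π x ω k = traj F π x ω' k := by
  induction k with
  | zero => rfl
  | succ k ih => simp only [traj, ih fun i hi => h i (by omega), h k (by omega)]

variable [MeasurableSpace X] [MeasurableSpace U] [MeasurableSpace W]

theorem measurable_traj (hF : Measurable fun p : X × U × W => F p.1 p.2.1 p.2.2)
    (hπ : Measurable π) (k : ℕ) : Measurable fun ω : ℕ → W => traj F π x ω k := by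
  induction k with
  | zero => exact measurable_const
  | succ k ih => exact hF.comp (ih.prodMk ((hπ.comp ih).prodMk (measurable_pi_apply k)))

variable {Ω : Type*} [MeasurableSpace Ω] {ξ : ℕ → Ω → W}

theorem measurable_trajOn (hF : Measurable fun p : X × U × W => F p.1 p.2.1 p.2.2)
    (hπ : Measurable π) (hξ : ∀ k, Measurable (ξ k)) (k : ℕ) :
    Measurable (trajOn F π x ξ k) :=
  (measurable_traj F π x hF hπ k).comp (measurable_pi_lambda _ hξ)

/-- The path `x₀, …, x_k` is a measurable function of `ξ₀, …, ξ_{k-1}`. -/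
theorem ProbabilityTheory.iIndepFun.indepFun_trajOn_prefix [Nonempty W] {P : Measure Ω}
    (hF : Measurable fun p : X × U × W => F p.1 p.2.1 p.2.2) (hπ : Measurable π)
    (hξmeas : ∀ k, Measurable (ξ k)) (hξ : iIndepFun ξ P) (k : ℕ) :
    IndepFun (fun ω (j : Fin (k + 1)) => trajOn F π x ξ j ω) (ξ k) P := by
  let extend : (Finset.range k → W) → ℕ → W := fun v i =>
    if hi : i < k then v ⟨i, Finset.mem_range.2 hi⟩ else Classical.arbitrary W
  have hextend : Measurable extend := measurable_pi_lambda _ fun i => by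
    by_cases hi : i < k
    · simpa only [extend, hi, dif_pos] using measurable_pi_apply _
    · simp only [extend, hi, dif_neg, not_false_iff, measurable_const]
  have hpath : Measurable fun v (j : Fin (k + 1)) => traj F π x (extend v) j :=
    measurable_pi_lambda _ fun j => (measurable_traj F π x hF hπ j).comp hextend
  have hcur : Measurable fun v : ({k} : Finset ℕ) → W => v ⟨k, Finset.mem_singleton_self k⟩ :=
    measurable_pi_apply _
  convert (hξ.indepFun_finset (Finset.range k) {k} (by simp) hξmeas).comp hpath hcur using 1
  · funext ω j
    exact traj_congr F π x fun i hi => by simp [extend, show i < k by omega]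
  · rfl

end Trajectory

theorem ProbabilityTheory.IndepFun.integral_comp_eq_integral_integral {Ω β W E : Type*}
    [MeasurableSpace Ω] [MeasurableSpace β] [MeasurableSpace W] [NormedAddCommGroup E]
    [NormedSpace ℝ E]
    {P : Measure Ω} [IsFiniteMeasure P] {μ : Measure W} {h : Ω → β} {ζ : Ω → W}
    (hind : IndepFun h ζ P) (hh : Measurable h) (hζ : Measurable ζ) (hlaw : P.map ζ = μ)
    {Φ : β × W → E} (hΦ : Integrable Φ ((P.map h).prod μ)) :
    ∫ ω, Φ (h ω, ζ ω) ∂P = ∫ ω, ∫ w, Φ (h ω, w) ∂μ ∂P := by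
  subst hlaw
  have hjoint : P.map (fun ω => (h ω, ζ ω)) = (P.map h).prod (P.map ζ) :=
    hind.map_prod_eq_prod_map_map hh.aemeasurable hζ.aemeasurable
  calc ∫ ω, Φ (h ω, ζ ω) ∂P
      = ∫ p, Φ p ∂(P.map fun ω => (h ω, ζ ω)) :=
        (integral_map (hh.prodMk hζ).aemeasurable (hjoint ▸ hΦ.aestronglyMeasurable)).symm
    _ = ∫ y, ∫ w, Φ (y, w) ∂(P.map ζ) ∂(P.map h) := by rw [hjoint, integral_prod Φ hΦ]
    _ = ∫ ω, ∫ w, Φ (h ω, w) ∂(P.map ζ) ∂P :=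
        integral_map hh.aemeasurable hΦ.integral_prod_left.aestronglyMeasurable

theorem integrable_comp_of_abs_le {α β : Type*} [MeasurableSpace α] [MeasurableSpace β]
    {P : Measure α} [IsFiniteMeasure P] {g : β → ℝ} (hg : Measurable g) {C : ℝ}
    (hC : ∀ y, |g y| ≤ C) {Z : α → β} (hZ : Measurable Z) : Integrable (fun a => g (Z a)) P :=
  .of_bound (hg.comp hZ).aestronglyMeasurable C (ae_of_all _ fun a => hC (Z a))

section StopIdx

variable {X Ω : Type*} {t : X} {Y : ℕ → Ω → X} {m k : ℕ} {ω : Ω}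

theorem stopIdx_le : stopIdx t Y m ω ≤ m := Nat.sInf_le (Or.inl rfl)

theorem lt_stopIdx_iff : k < stopIdx t Y m ω ↔ k < m ∧ ∀ j ≤ k, Y j ω ≠ t := by
  constructor
  · intro hk
    refine ⟨hk.trans_le stopIdx_le, fun j hj hYj => ?_⟩
    exact Nat.notMem_of_lt_sInf (hj.trans_lt hk) (Or.inr hYj)
  · rintro ⟨hkm, hY⟩
    by_contra! hle
    rcases Nat.sInf_mem (s := {j | j = m ∨ Y j ω = t}) ⟨m, Or.inl rfl⟩ with hm | hYt
    · exact hkm.not_ge (hm ▸ hle)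
    · exact hY _ hle hYt

theorem lt_hitTime_of_lt_stopIdx (hk : k < stopIdx t Y m ω) : (k : ℝ≥0∞) < hitTime t Y ω := by
  have hY := (lt_stopIdx_iff.1 hk).2
  calc (k : ℝ≥0∞) < ((k + 1 : ℕ) : ℝ≥0∞) := by exact_mod_cast k.lt_succ_self
    _ ≤ hitTime t Y ω := le_iInf₂ fun j hj =>
        Nat.cast_le.2 (by by_contra! hjk; exact hY j (by omega) hj)

theorem sum_range_stopIdx_eq {M : Type*} [AddCommMonoid M] (g : ℕ → M) :
    ∑ k ∈ Finset.range (stopIdx t Y m ω), g k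
      = ∑ k ∈ Finset.range m, if k < stopIdx t Y m ω then g k else 0 := by
  rw [← Finset.sum_filter]
  congr 1
  ext k
  simp only [Finset.mem_filter, Finset.mem_range]
  have := stopIdx_le (t := t) (Y := Y) (m := m) (ω := ω)
  omega

variable [MeasurableSpace Ω] {P : Measure Ω}

theorem integrable_sum_range_stopIdx {g : ℕ → Ω → ℝ}
    (hg : ∀ k, Integrable (fun ω => if k < stopIdx t Y m ω then g k ω else 0) P) :
    Integrable (fun ω => ∑ k ∈ Finset.range (stopIdx t Y m ω), g k ω) P := by
  simp_rw [sum_range_stopIdx_eq]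
  exact integrable_finsetSum _ fun k _ => hg k

theorem integral_sum_range_stopIdx {g : ℕ → Ω → ℝ}
    (hg : ∀ k, Integrable (fun ω => if k < stopIdx t Y m ω then g k ω else 0) P) :
    ∫ ω, ∑ k ∈ Finset.range (stopIdx t Y m ω), g k ω ∂P
      = ∑ k ∈ Finset.range m, ∫ ω, (if k < stopIdx t Y m ω then g k ω else 0) ∂P := by
  simp_rw [sum_range_stopIdx_eq]
  exact integral_finsetSum _ fun k _ => hg k

variable [MeasurableSpace X] [MeasurableSingletonClass X]

theorem measurableSet_lt_stopIdx (hY : ∀ k, Measurable (Y k)) (k : ℕ) :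
    MeasurableSet {ω | k < stopIdx t Y m ω} := by
  simp only [lt_stopIdx_iff, Set.ofPred_and, Set.ofPred_forall]
  exact (MeasurableSet.const _).inter
    (.iInter fun j => .iInter fun _ => ((hY j) (measurableSet_singleton t)).compl)

theorem measurable_stopIdx (hY : ∀ k, Measurable (Y k)) : Measurable (stopIdx t Y m) :=
  measurable_of_Ioi fun k => measurableSet_lt_stopIdx hY k

theorem measurable_stoppedState (hY : ∀ k, Measurable (Y k)) :
    Measurable fun ω => Y (stopIdx t Y m ω) ω :=
  (measurable_from_prod_countable_right (f := fun p : ℕ × Ω => Y p.1 p.2) hY).comp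
    ((measurable_stopIdx hY).prodMk measurable_id)

theorem MeasureTheory.Integrable.ite_lt_stopIdx (hY : ∀ k, Measurable (Y k)) {g : Ω → ℝ}
    (hg : Integrable g P) (k : ℕ) :
    Integrable (fun ω => if k < stopIdx t Y m ω then g ω else 0) P := by
  refine (hg.indicator (measurableSet_lt_stopIdx (t := t) (m := m) hY k)).congr
    (ae_of_all _ fun ω => ?_)
  simp [Set.indicator_apply]

theorem integrable_ite_lt_stopIdx_stageCost {U : Type*} [MeasurableSpace U]
    {f : X → U → ℝ} {π : X → U} (hY : ∀ k, Measurable (Y k))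
    (hf : Measurable fun p : X × U => f p.1 p.2) (hπ : Measurable π) (hfnn : ∀ y u, 0 ≤ f y u)
    (hJ : totalCost P t f π Y < ⊤) (k : ℕ) :
    Integrable (fun ω => if k < stopIdx t Y m ω then f (Y k ω) (π (Y k ω)) else 0) P := by
  refine ⟨(Measurable.ite (measurableSet_lt_stopIdx hY k)
    (hf.comp ((hY k).prodMk (hπ.comp (hY k)))) measurable_const).aestronglyMeasurable, ?_⟩
  rw [hasFiniteIntegral_iff_ofReal (ae_of_all _ fun ω => by split_ifs <;> simp [hfnn])]
  refine lt_of_le_of_lt (lintegral_mono fun ω => ?_) hJ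
  split_ifs with hk
  · calc ENNReal.ofReal (f (Y k ω) (π (Y k ω)))
        = if (k : ℝ≥0∞) < hitTime t Y ω then ENNReal.ofReal (f (Y k ω) (π (Y k ω))) else 0 :=
          (if_pos (lt_hitTime_of_lt_stopIdx hk)).symm
      _ ≤ _ := ENNReal.le_tsum k
  · simp

end StopIdx
noncomputable def expectedNext {X U W : Type*} [MeasurableSpace W] (μ : Measure W)
    (F : X → U → W → X) (π : X → U) (V : X → ℝ) (y : X) : ℝ :=
  ∫ w, V (F y (π y) w) ∂μ

section Dynkin

variable {X U W Ω : Type*} [MeasurableSpace W] {μ : Measure W} {F : X → U → W → X} {π : X → U}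
  {V : X → ℝ} {C : ℝ}

theorem abs_expectedNext_le [IsProbabilityMeasure μ] (hC : ∀ y, |V y| ≤ C) (y : X) :
    |expectedNext μ F π V y| ≤ C := by
  simpa [expectedNext] using
    norm_integral_le_of_norm_le_const (μ := μ) (f := fun w => V (F y (π y) w))
    (ae_of_all _ fun w => hC _)

variable [MeasurableSpace X] [MeasurableSpace U]

theorem measurable_expectedNext [SFinite μ]
    (hF : Measurable fun p : X × U × W => F p.1 p.2.1 p.2.2) (hπ : Measurable π)
    (hV : Measurable V) : Measurable (expectedNext μ F π V) :=
  (hV.comp (hF.comp (measurable_fst.prodMk ((hπ.comp measurable_fst).prodMk measurable_snd))))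
    |>.stronglyMeasurable.integral_prod_right'.measurable

theorem integrable_expectedNext_comp [IsProbabilityMeasure μ] [MeasurableSpace Ω]
    {P : Measure Ω} [IsFiniteMeasure P]
    (hF : Measurable fun p : X × U × W => F p.1 p.2.1 p.2.2) (hπ : Measurable π)
    (hV : Measurable V) (hC : ∀ y, |V y| ≤ C) {Z : Ω → X} (hZ : Measurable Z) :
    Integrable (fun ω => expectedNext μ F π V (Z ω)) P :=
  integrable_comp_of_abs_le (measurable_expectedNext hF hπ hV) (abs_expectedNext_le hC) hZ

variable [MeasurableSingletonClass X] [MeasurableSpace Ω] [IsProbabilityMeasure μ]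
  {P : Measure Ω} [IsProbabilityMeasure P] {t x : X} {ξ : ℕ → Ω → W}

/-- The increment `(P_π V)(x_k) - V(x_{k+1})` is centred given the path up to time `k`, and the
event `k < σ_m` is decided by that path. -/
theorem integral_ite_lt_stopIdx_expectedNext_sub_eq_zero
    (hF : Measurable fun p : X × U × W => F p.1 p.2.1 p.2.2) (hπ : Measurable π)
    (hξmeas : ∀ k, Measurable (ξ k)) (hξ : iIndepFun ξ P) (hlaw : ∀ k, P.map (ξ k) = μ)
    (hV : Measurable V) (hC : ∀ y, |V y| ≤ C)
    (hVint : ∀ y u, Integrable (fun w => V (F y u w)) μ) (m k : ℕ) :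
    ∫ ω, (if k < stopIdx t (trajOn F π x ξ) m ω then
      expectedNext μ F π V (trajOn F π x ξ k ω) - V (trajOn F π x ξ (k + 1) ω) else 0) ∂P
      = 0 := by
  have := nonempty_of_isProbabilityMeasure μ
  set Y := trajOn F π x ξ
  have hY := measurable_trajOn F π x hF hπ hξmeas
  let S : Set (Fin (k + 1) → X) := {z | k < m ∧ ∀ j, z j ≠ t}
  have hS : MeasurableSet S := by
    simp only [S, Set.ofPred_and, Set.ofPred_forall]
    exact (MeasurableSet.const _).inter
      (.iInter fun j => ((measurableSet_singleton t).preimage (measurable_pi_apply j)).compl)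
  let last : (Fin (k + 1) → X) × W → X := fun p => p.1 (Fin.last k)
  have hlast : Measurable last := (measurable_pi_apply _).comp measurable_fst
  have hnext : Measurable fun p => F (last p) (π (last p)) p.2 :=
    hF.comp (hlast.prodMk ((hπ.comp hlast).prodMk measurable_snd))
  let Φ := (S ×ˢ Set.univ).indicator fun p =>
    expectedNext μ F π V (last p) - V (F (last p) (π (last p)) p.2)
  have hΦ : Integrable Φ ((P.map fun ω (j : Fin (k + 1)) => Y j ω).prod μ) :=
    ((integrable_expectedNext_comp hF hπ hV hC hlast).sub
      (integrable_comp_of_abs_le hV hC hnext)).indicator (hS.prod .univ)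
  have hterm : ∀ ω, (if k < stopIdx t Y m ω then
      expectedNext μ F π V (Y k ω) - V (Y (k + 1) ω) else 0)
      = Φ ((fun j : Fin (k + 1) => Y j ω), ξ k ω) := by
    intro ω
    have hmem :
        k < stopIdx t Y m ω ↔ ((fun j : Fin (k + 1) => Y j ω), ξ k ω) ∈ S ×ˢ Set.univ := by
      simp only [lt_stopIdx_iff, Set.mem_prod, Set.mem_univ, and_true, S, Set.mem_ofPred_eq,
        Fin.forall_iff, Nat.lt_succ_iff]
    simp only [Φ]
    by_cases hk : k < stopIdx t Y m ω
    · rw [if_pos hk, Set.indicator_of_mem (hmem.1 hk)]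
      rfl
    · rw [if_neg hk, Set.indicator_of_notMem (mt hmem.2 hk)]
  have hinner : ∀ z, ∫ w, Φ (z, w) ∂μ = 0 := by
    intro z
    by_cases hz : z ∈ S
    · have hΦz : ∀ w, Φ (z, w) = expectedNext μ F π V (z (Fin.last k))
          - V (F (z (Fin.last k)) (π (z (Fin.last k))) w) := fun w =>
        Set.indicator_of_mem (Set.mk_mem_prod hz (Set.mem_univ w)) _
      simp_rw [hΦz]
      rw [integral_sub (integrable_const _) (hVint _ _), integral_const]
      simp [expectedNext]
    · have hΦz : ∀ w, Φ (z, w) = 0 := fun w => Set.indicator_of_notMem (fun h => hz h.1) _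
      simp [hΦz]
  simp_rw [hterm]
  rw [(hξ.indepFun_trajOn_prefix F π x hF hπ hξmeas k).integral_comp_eq_integral_integral
    (measurable_pi_lambda _ fun j => hY j) (hξmeas k) (hlaw k) hΦ]
  simp [hinner]

/-- Dynkin's formula for the closed loop stopped at `σ_m = τ ∧ m`. -/
theorem integral_sum_range_stopIdx_expectedNext_sub
    (hF : Measurable fun p : X × U × W => F p.1 p.2.1 p.2.2) (hπ : Measurable π)
    (hξmeas : ∀ k, Measurable (ξ k)) (hξ : iIndepFun ξ P) (hlaw : ∀ k, P.map (ξ k) = μ)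
    (hV : Measurable V) (hC : ∀ y, |V y| ≤ C)
    (hVint : ∀ y u, Integrable (fun w => V (F y u w)) μ) (m : ℕ) :
    ∫ ω, ∑ k ∈ Finset.range (stopIdx t (trajOn F π x ξ) m ω),
        (expectedNext μ F π V (trajOn F π x ξ k ω) - V (trajOn F π x ξ k ω)) ∂P
      = ∫ ω, V (trajOn F π x ξ (stopIdx t (trajOn F π x ξ) m ω) ω) ∂P - V x := by
  set Y := trajOn F π x ξ
  have hY := measurable_trajOn F π x hF hπ hξmeas
  have htel : ∀ ω,
      ∑ k ∈ Finset.range (stopIdx t Y m ω), (expectedNext μ F π V (Y k ω) - V (Y k ω))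
      = ∑ k ∈ Finset.range (stopIdx t Y m ω), (expectedNext μ F π V (Y k ω) - V (Y (k + 1) ω))
        + (V (Y (stopIdx t Y m ω) ω) - V x) := by
    intro ω
    change _ = _ + (_ - V (Y 0 ω))
    rw [← Finset.sum_range_sub (fun k => V (Y k ω)), ← Finset.sum_add_distrib]
    exact Finset.sum_congr rfl fun k _ => by ring
  have hincr : ∀ k, Integrable (fun ω => if k < stopIdx t Y m ω then
      expectedNext μ F π V (Y k ω) - V (Y (k + 1) ω) else 0) P := fun k =>
    ((integrable_expectedNext_comp hF hπ hV hC (hY k)).sub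
      (integrable_comp_of_abs_le hV hC (hY (k + 1)))).ite_lt_stopIdx hY k
  have hstop : Integrable (fun ω => V (Y (stopIdx t Y m ω) ω)) P :=
    integrable_comp_of_abs_le hV hC (measurable_stoppedState hY)
  have hstop' : Integrable (fun ω => V (Y (stopIdx t Y m ω) ω) - V x) P :=
    hstop.sub (integrable_const _)
  calc _ = ∫ ω, (∑ k ∈ Finset.range (stopIdx t Y m ω),
          (expectedNext μ F π V (Y k ω) - V (Y (k + 1) ω))
          + (V (Y (stopIdx t Y m ω) ω) - V x)) ∂P := integral_congr_ae (ae_of_all _ htel)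
    _ = ∑ k ∈ Finset.range m, ∫ ω, (if k < stopIdx t Y m ω then
          expectedNext μ F π V (Y k ω) - V (Y (k + 1) ω) else 0) ∂P
          + (∫ ω, V (Y (stopIdx t Y m ω) ω) ∂P - V x) := by
      rw [integral_add (integrable_sum_range_stopIdx hincr) hstop',
        integral_sum_range_stopIdx hincr, integral_sub hstop (integrable_const _), integral_const]
      simp
    _ = _ := by
      rw [Finset.sum_eq_zero fun k _ => integral_ite_lt_stopIdx_expectedNext_sub_eq_zero
        hF hπ hξmeas hξ hlaw hV hC hVint m k, zero_add]

end Dynkin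

theorem stopped_performance_difference_identity_general
    {X U W Ω : Type*} [MeasurableSpace X] [MeasurableSingletonClass X]
    [MeasurableSpace U] [MeasurableSpace W] [MeasurableSpace Ω]
    (μ : Measure W) [IsProbabilityMeasure μ] (P : Measure Ω) [IsProbabilityMeasure P]
    (t : X) (F : X → U → W → X) (f : X → U → ℝ)
    -- SSP model: nonempty control sets, nonnegative measurable stage cost, measurable dynamics,
    -- absorbing cost-free terminal state
    (hfnn : ∀ y u, 0 ≤ f y u)
    (hFmeas : Measurable fun p : X × U × W => F p.1 p.2.1 p.2.2)
    (hfmeas : Measurable fun p : X × U => f p.1 p.2)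
    -- V* : bounded measurable, V*(t)=0, Bellman fixed point, well-defined one-step integrals
    (Vstar : X → ℝ) (hVsmeas : Measurable Vstar) (hVsbdd : ∃ C, ∀ y, |Vstar y| ≤ C)
    (hVsint : ∀ y u, Integrable (fun w => Vstar (F y u w)) μ)
    (π : X → U) (hπmeas : Measurable π)
    -- i.i.d. disturbance sequence with common law μ on an abstract probability space
    (ξ : ℕ → Ω → W) (hξmeas : ∀ k, Measurable (ξ k))
    (hξindep : iIndepFun ξ P)
    (hξlaw : ∀ k, P.map (ξ k) = μ)
    -- properness of the closed loop from x: τ < ∞ a.s. and J(x) < ∞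
    (x : X)
    (hproper_J : totalCost P t f π (trajOn F π x ξ) < ⊤)
    (m : ℕ) :
    (∫ ω, (∑ k ∈ Finset.range (stopIdx t (trajOn F π x ξ) m ω),
        f (trajOn F π x ξ k ω) (π (trajOn F π x ξ k ω))) ∂P) - Vstar x
      = (∫ ω, (∑ k ∈ Finset.range (stopIdx t (trajOn F π x ξ) m ω),
          advantage μ f F Vstar (trajOn F π x ξ k ω) (π (trajOn F π x ξ k ω))) ∂P)
        - ∫ ω, Vstar (trajOn F π x ξ (stopIdx t (trajOn F π x ξ) m ω) ω) ∂P := by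
  obtain ⟨C, hC⟩ := hVsbdd
  set Y := trajOn F π x ξ
  have hY := measurable_trajOn F π x hFmeas hπmeas hξmeas
  have hsplit : ∀ ω,
      ∑ k ∈ Finset.range (stopIdx t Y m ω), advantage μ f F Vstar (Y k ω) (π (Y k ω))
      = ∑ k ∈ Finset.range (stopIdx t Y m ω), f (Y k ω) (π (Y k ω))
        + ∑ k ∈ Finset.range (stopIdx t Y m ω),
          (expectedNext μ F π Vstar (Y k ω) - Vstar (Y k ω)) := fun ω => by
    rw [← Finset.sum_add_distrib]
    exact Finset.sum_congr rfl fun k _ => add_sub_assoc _ _ _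
  have hcost := integrable_sum_range_stopIdx (m := m) fun k =>
    integrable_ite_lt_stopIdx_stageCost hY hfmeas hπmeas hfnn hproper_J k
  have hdrift : Integrable (fun ω => ∑ k ∈ Finset.range (stopIdx t Y m ω),
      (expectedNext μ F π Vstar (Y k ω) - Vstar (Y k ω))) P :=
    integrable_sum_range_stopIdx fun k =>
      ((integrable_expectedNext_comp hFmeas hπmeas hVsmeas hC (hY k)).sub
        (integrable_comp_of_abs_le hVsmeas hC (hY k))).ite_lt_stopIdx hY k
  rw [integral_congr_ae (ae_of_all _ hsplit), integral_add hcost hdrift,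
    integral_sum_range_stopIdx_expectedNext_sub hFmeas hπmeas hξmeas hξindep hξlaw hVsmeas hC
      hVsint m]
  ring

/-- Stopped performance-difference identity: with `σ_m = τ ∧ m` (`m ≥ 1`),
`E[ Σ_{k=0}^{σ_m-1} f(x_k, π(x_k)) ] - V*(x)
  = E[ Σ_{k=0}^{σ_m-1} A*(x_k, π(x_k)) ] - E[ V*(x_{σ_m}) ]`. -/
theorem stopped_performance_difference_identity
    {X U W Ω : Type*} [MeasurableSpace X] [MeasurableSingletonClass X]
    [MeasurableSpace U] [MeasurableSpace W] [MeasurableSpace Ω]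
    (μ : Measure W) [IsProbabilityMeasure μ] (P : Measure Ω) [IsProbabilityMeasure P]
    (t : X) (u0 : U) (Ua : X → Set U) (F : X → U → W → X) (f : X → U → ℝ)
    -- SSP model: nonempty control sets, nonnegative measurable stage cost, measurable dynamics,
    -- absorbing cost-free terminal state
    (hUne : ∀ y, (Ua y).Nonempty) (hfnn : ∀ y u, 0 ≤ f y u)
    (hFmeas : Measurable fun p : X × U × W => F p.1 p.2.1 p.2.2)
    (hfmeas : Measurable fun p : X × U => f p.1 p.2)
    (hUt : Ua t = {u0}) (hft : f t u0 = 0) (hFt : ∀ w, F t u0 w = t)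
    -- V* : bounded measurable, V*(t)=0, Bellman fixed point, well-defined one-step integrals
    (Vstar : X → ℝ) (hVsmeas : Measurable Vstar) (hVsbdd : ∃ C, ∀ y, |Vstar y| ≤ C)
    (hVst : Vstar t = 0) (hVsfix : ∀ y, Vstar y = bellman μ t Ua f F Vstar y)
    (hVsint : ∀ y u, Integrable (fun w => Vstar (F y u w)) μ)
    (π : X → U) (hπmeas : Measurable π) (hπadm : ∀ y, π y ∈ Ua y)
    -- i.i.d. disturbance sequence with common law μ on an abstract probability space
    (ξ : ℕ → Ω → W) (hξmeas : ∀ k, Measurable (ξ k))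
    (hξindep : iIndepFun ξ P)
    (hξlaw : ∀ k, P.map (ξ k) = μ)
    -- properness of the closed loop from x: τ < ∞ a.s. and J(x) < ∞
    (x : X)
    (hproper_tau : ∀ᵐ ω ∂P, hitTime t (trajOn F π x ξ) ω < ⊤)
    (hproper_J : totalCost P t f π (trajOn F π x ξ) < ⊤)
    (m : ℕ) (hm : 1 ≤ m) :
    (∫ ω, (∑ k ∈ Finset.range (stopIdx t (trajOn F π x ξ) m ω),
        f (trajOn F π x ξ k ω) (π (trajOn F π x ξ k ω))) ∂P) - Vstar x
      = (∫ ω, (∑ k ∈ Finset.range (stopIdx t (trajOn F π x ξ) m ω),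
          advantage μ f F Vstar (trajOn F π x ξ k ω) (π (trajOn F π x ξ k ω))) ∂P)
        - ∫ ω, Vstar (trajOn F π x ξ (stopIdx t (trajOn F π x ξ) m ω) ω) ∂P :=
  stopped_performance_difference_identity_general μ P t F f hfnn hFmeas hfmeas Vstar hVsmeas hVsbdd
    hVsint π hπmeas ξ hξmeas hξindep hξlaw x hproper_J m
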